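/- arXiv:1609.03432 — 5 statements merged into one kernel-verified Lean document; each statement's English description precedes it below -/
import Mathlib

section
/- Let r be an irreflexive and transitive relation and M, N finite multisets with M >ᵐᵘˡ N, where >ᵐᵘˡ is the multiset extension of r (M >ᵐᵘˡ N iff there exist multisets X, Y, Z with X nonempty, M = X + Z, N = Y + Z, and every element of Y is r-below some element of X). Let X = M - (M ∩ N) and Y = N - (M ∩ N). Then X is nonempty and for every y in Y there exists x in X with r x y. -/
def MulExt {A : Type*} (r : A → A → Prop) (M N : Multiset A) : Prop :=
  ∃ X Y Z : Multiset A, X ≠ 0 ∧ M = X + Z ∧ N = Y + Z ∧ ∀ y ∈ Y, ∃ x ∈ X, r x y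

lemma exists_r_maximal {A : Type*} (r : A → A → Prop)
    (hirr : ∀ x, ¬ r x x) (htrans : ∀ x y z, r x y → r y z → r x z) :
    ∀ s : Multiset A, s ≠ 0 → ∃ x ∈ s, ∀ x' ∈ s, ¬ r x' x := by
  intro s
  induction s using Multiset.induction_on with
  | empty => intro h; exact absurd rfl h
  | cons a t ih =>
    intro _
    by_cases ht : t = 0
    · subst ht
      refine ⟨a, Multiset.mem_cons_self a 0, ?_⟩
      intro x' hx'
      simp only [Multiset.mem_cons, Multiset.notMem_zero, or_false] at hx'
      subst hx'; exact hirr x'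
    · obtain ⟨x, hxt, hxmax⟩ := ih ht
      by_cases hax : r a x
      · refine ⟨a, Multiset.mem_cons_self a t, ?_⟩
        intro x' hx'
        rcases Multiset.mem_cons.mp hx' with rfl | hx't
        · exact hirr x'
        · intro hra
          exact hxmax x' hx't (htrans x' a x hra hax)
      · refine ⟨x, Multiset.mem_cons_of_mem hxt, ?_⟩
        intro x' hx'
        rcases Multiset.mem_cons.mp hx' with rfl | hx't
        · exact hax
        · exact hxmax x' hx't

theorem mulext_disjoint_witness {A : Type*} [DecidableEq A] (r : A → A → Prop)
    (hirr : ∀ x, ¬ r x x)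
    (htrans : ∀ x y z, r x y → r y z → r x z)
    (M N : Multiset A) (h : MulExt r M N) :
    M - M ∩ N ≠ 0 ∧ ∀ y ∈ N - M ∩ N, ∃ x ∈ M - M ∩ N, r x y := by
  classical
  obtain ⟨X, Y, Z, hX, hM, hN, hYX⟩ := h
  set W := M ∩ N with hW
  set D := W - Z with hD
  have hcntW : ∀ a, Multiset.count a W = min (Multiset.count a M) (Multiset.count a N) := by
    intro a; simp [hW, Multiset.count_inter]
  have hDY : D ≤ Y := by
    rw [Multiset.le_iff_count]
    intro a
    simp only [hD, Multiset.count_sub, hcntW, hM, hN, Multiset.count_add]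
    omega
  have hMW : M - W = X - D := by
    ext a
    simp only [Multiset.count_sub, hcntW, hD, hM, hN, Multiset.count_add]
    omega
  have hNW : N - W = Y - D := by
    ext a
    simp only [Multiset.count_sub, hcntW, hD, hM, hN, Multiset.count_add]
    omega
  -- key : every y reachable from X is reachable from X - D
  have key : ∀ y, (∃ x ∈ X, r x y) → ∃ x ∈ X - D, r x y := by
    intro y hy
    set S := X.filter (fun x => r x y) with hS
    have hS0 : S ≠ 0 := by
      obtain ⟨x, hxX, hxy⟩ := hy
      intro h0
      have : x ∈ S := Multiset.mem_filter.mpr ⟨hxX, hxy⟩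
      rw [h0] at this; exact Multiset.notMem_zero x this
    obtain ⟨x, hxS, hxmax⟩ := exists_r_maximal r hirr htrans S hS0
    have hxX : x ∈ X := (Multiset.mem_filter.mp hxS).1
    have hxy : r x y := (Multiset.mem_filter.mp hxS).2
    by_cases hmem : x ∈ X - D
    · exact ⟨x, hmem, hxy⟩
    · exfalso
      have hcnt : Multiset.count x X ≤ Multiset.count x D := by
        have := Multiset.count_sub x X D
        have h0 : Multiset.count x (X - D) = 0 := Multiset.count_eq_zero.mpr hmem
        omega
      have hxD : x ∈ D := by
        rw [← Multiset.count_pos] at hxX ⊢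
        omega
      have hxY : x ∈ Y := Multiset.mem_of_le hDY hxD
      obtain ⟨x2, hx2X, hx2x⟩ := hYX x hxY
      have hx2S : x2 ∈ S := Multiset.mem_filter.mpr ⟨hx2X, htrans x2 x y hx2x hxy⟩
      exact hxmax x2 hx2S hx2x
  constructor
  · rw [hMW]
    intro h0
    have hXD : X ≤ D := by
      rw [Multiset.le_iff_count]
      intro a
      have := Multiset.count_sub a X D
      rw [h0] at this
      simp at this
      omega
    obtain ⟨x, hxX, hxmax⟩ := exists_r_maximal r hirr htrans X hX
    have hxY : x ∈ Y := Multiset.mem_of_le hDY (Multiset.mem_of_le hXD hxX)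
    obtain ⟨x2, hx2X, hx2x⟩ := hYX x hxY
    exact hxmax x2 hx2X hx2x
  · intro y hy
    rw [hNW] at hy
    have hyY : y ∈ Y := Multiset.mem_of_le (Multiset.sub_le_self Y D) hy
    rw [hMW]
    exact key y (hYX y hyY)
end

section
/- For finite multisets M, N over a type A and an irreflexive transitive relation r, if for every element d occurring in M or N, (∀ e, r e d → M(e) = N(e)) implies M(d) ≥ N(d), and M ≠ N, then M >ᵐᵘˡ N (the multiset extension of r). -/
theorem counts_imp_mulext {A : Type*} [DecidableEq A] (r : A → A → Prop)
    (hirr : ∀ x, ¬ r x x)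
    (htrans : ∀ x y z, r x y → r y z → r x z)
    (M N : Multiset A)
    (h : ∀ d, (d ∈ M ∨ d ∈ N) →
      (∀ e, r e d → M.count e = N.count e) → M.count d ≥ N.count d)
    (hne : M ≠ N) :
    MulExt r M N := by
  classical
  set S : Finset A := (M + N).toFinset.filter (fun a => M.count a ≠ N.count a) with hS
  have hmemS : ∀ a, M.count a ≠ N.count a → a ∈ S := by
    intro a ha
    have : a ∈ M + N := by
      rw [Multiset.mem_add]
      rcases Nat.lt_or_ge 0 (M.count a) with h1 | h1
      · exact Or.inl (Multiset.count_pos.mp h1)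
      · have : 0 < N.count a := by omega
        exact Or.inr (Multiset.count_pos.mp this)
    exact Finset.mem_filter.mpr ⟨Multiset.mem_toFinset.mpr this, ha⟩
  have step : ∀ y, M.count y < N.count y →
      ∃ e, r e y ∧ M.count e ≠ N.count e := by
    intro y hy
    have hyN : y ∈ N := Multiset.count_pos.mp (by omega)
    have := h y (Or.inr hyN)
    by_contra hc
    push_neg at hc
    have : ∀ e, r e y → M.count e = N.count e := fun e he => hc e he
    have := h y (Or.inr hyN) this
    omega
  have key : ∀ n : ℕ, ∀ y : A, (S.filter (fun z => r z y)).card ≤ n →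
      M.count y < N.count y → ∃ x, r x y ∧ N.count x < M.count x := by
    intro n
    induction n with
    | zero =>
      intro y hc hy
      obtain ⟨e, hey, hne'⟩ := step y hy
      have : e ∈ S.filter (fun z => r z y) := Finset.mem_filter.mpr ⟨hmemS e hne', hey⟩
      have := Finset.card_pos.mpr ⟨e, this⟩
      omega
    | succ n ih =>
      intro y hc hy
      obtain ⟨e, hey, hne'⟩ := step y hy
      rcases Nat.lt_or_ge (N.count e) (M.count e) with h1 | h1
      · exact ⟨e, hey, h1⟩
      · have he2 : M.count e < N.count e := by omega
        have hsub : S.filter (fun z => r z e) ⊂ S.filter (fun z => r z y) := by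
          constructor
          · intro z hz
            rw [Finset.mem_filter] at hz ⊢
            exact ⟨hz.1, htrans z e y hz.2 hey⟩
          · intro hss
            have heIn : e ∈ S.filter (fun z => r z y) :=
              Finset.mem_filter.mpr ⟨hmemS e hne', hey⟩
            have := Finset.mem_filter.mp (hss heIn)
            exact hirr e this.2
        have hcard : (S.filter (fun z => r z e)).card ≤ n := by
          have := Finset.card_lt_card hsub
          omega
        obtain ⟨x, hxe, hx⟩ := ih e hcard he2
        exact ⟨x, htrans x e y hxe hey, hx⟩
  have key' : ∀ y : A, M.count y < N.count y →
      ∃ x, r x y ∧ N.count x < M.count x := fun y hy =>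
    key (S.filter (fun z => r z y)).card y le_rfl hy
  refine ⟨M - N, N - M, M ∩ N, ?_, (Multiset.sub_add_inter M N).symm, ?_, ?_⟩
  · intro h0
    have hle : M ≤ N := tsub_eq_zero_iff_le.mp h0
    have hlec : ∀ a, M.count a ≤ N.count a := fun a => Multiset.count_le_of_le a hle
    have : ∃ y, M.count y ≠ N.count y := by
      by_contra hc
      push_neg at hc
      exact hne (Multiset.ext.mpr hc)
    obtain ⟨y, hy⟩ := this
    have hy' : M.count y < N.count y := lt_of_le_of_ne (hlec y) hy
    obtain ⟨x, _, hx⟩ := key' y hy'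
    have := hlec x
    omega
  · rw [Multiset.inter_comm]
    exact (Multiset.sub_add_inter N M).symm
  · intro y hy
    have : 0 < (N - M).count y := Multiset.count_pos.mpr hy
    rw [Multiset.count_sub] at this
    have hy' : M.count y < N.count y := by omega
    obtain ⟨x, hxy, hx⟩ := key' y hy'
    refine ⟨x, ?_, hxy⟩
    rw [← Multiset.count_pos, Multiset.count_sub]
    omega
end

section
/- For finite multisets M, N over a type A and an irreflexive transitive relation r, if M >ᵐᵘˡ N (the multiset extension of r), then M ≠ N and for every element d, if all e with r e d satisfy M(e) = N(e), then M(d) ≥ N(d). -/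
theorem exists_unhit {A : Type*} (r : A → A → Prop)
    (hirr : ∀ x, ¬ r x x) (htrans : ∀ x y z, r x y → r y z → r x z) :
    ∀ s : Multiset A, s ≠ 0 → ∃ m ∈ s, ∀ x ∈ s, ¬ r x m := by
  intro s
  induction s using Multiset.induction_on with
  | empty => intro h; exact absurd rfl h
  | cons a t ih =>
    intro _
    by_cases ht : t = 0
    · subst ht
      refine ⟨a, Multiset.mem_cons_self a 0, ?_⟩
      intro x hx hr
      rw [Multiset.mem_cons] at hx
      rcases hx with rfl | hx
      · exact hirr _ hr
      · simp at hx
    · obtain ⟨m, hm, hmax⟩ := ih ht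
      by_cases ham : r a m
      · refine ⟨a, Multiset.mem_cons_self a t, ?_⟩
        intro x hx hr
        rw [Multiset.mem_cons] at hx
        rcases hx with rfl | hx
        · exact hirr _ hr
        · exact hmax x hx (htrans _ _ _ hr ham)
      · refine ⟨m, Multiset.mem_cons_of_mem hm, ?_⟩
        intro x hx hr
        rw [Multiset.mem_cons] at hx
        rcases hx with rfl | hx
        · exact ham hr
        · exact hmax x hx hr

theorem mulext_imp_counts {A : Type*} [DecidableEq A] (r : A → A → Prop)
    (hirr : ∀ x, ¬ r x x)
    (htrans : ∀ x y z, r x y → r y z → r x z)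
    (M N : Multiset A) (h : MulExt r M N) :
    M ≠ N ∧ ∀ d, (∀ e, r e d → M.count e = N.count e) → M.count d ≥ N.count d := by
  classical
  obtain ⟨X, Y, Z, hX, hM, hN, hdom⟩ := h
  subst hM; subst hN
  constructor
  · intro hMN
    have hXY : X = Y := add_right_cancel hMN
    obtain ⟨m, hm, hmax⟩ := exists_unhit r hirr htrans X hX
    obtain ⟨x, hx, hr⟩ := hdom m (hXY ▸ hm)
    exact hmax x hx hr
  · intro d hcnt
    simp only [Multiset.count_add] at *
    have hXY : ∀ e, r e d → X.count e = Y.count e := by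
      intro e he; have := hcnt e he; omega
    by_contra hlt
    push_neg at hlt
    have hYd : d ∈ Y := by
      rw [← Multiset.count_pos]; omega
    obtain ⟨x0, hx0, hr0⟩ := hdom d hYd
    set Yg := Y.filter (fun e => r e d) with hYgdef
    have hXgYg : X.filter (fun e => r e d) = Yg := by
      rw [hYgdef]
      refine Multiset.ext.2 fun e => ?_
      rw [Multiset.count_filter, Multiset.count_filter]
      split_ifs with he
      · exact hXY e he
      · rfl
    have hYgne : Yg ≠ 0 := by
      intro h0
      have hx0' : x0 ∈ X.filter (fun e => r e d) := Multiset.mem_filter.2 ⟨hx0, hr0⟩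
      rw [hXgYg, h0] at hx0'
      simp at hx0'
    obtain ⟨m, hm, hmax⟩ := exists_unhit r hirr htrans Yg hYgne
    have hmY : m ∈ Y := (Multiset.mem_filter.1 hm).1
    have hmd : r m d := (Multiset.mem_filter.1 hm).2
    obtain ⟨x, hx, hr⟩ := hdom m hmY
    have hxYg : x ∈ Yg := by
      rw [← hXgYg]
      exact Multiset.mem_filter.2 ⟨hx, htrans _ _ _ hr hmd⟩
    exact hmax x hxYg hr
end

section
/- Let r be irreflexive and transitive, and let M, N be finite multisets with M >ᵐᵘˡ N witnessed by X, Y, Z (X ≠ ∅, M = X + Z, N = Y + Z, every y ∈ Y is r-below some x ∈ X). Then every element j of Y that is not in X - (X ∩ Y) is r-below some element of X - (X ∩ Y); consequently the decomposition can be chosen with X and Y disjoint. -/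
lemma exists_rel_maximal {A : Type*} [DecidableEq A] (r : A → A → Prop)
    (hirr : ∀ x, ¬ r x x)
    (htrans : ∀ x y z, r x y → r y z → r x z)
    (s : Finset A) (hs : s.Nonempty) : ∃ m ∈ s, ∀ t ∈ s, ¬ r t m := by
  classical
  induction s using Finset.induction_on with
  | empty => simp at hs
  | @insert a s ha ih =>
    rcases s.eq_empty_or_nonempty with rfl | hne
    · exact ⟨a, by simp, by simpa using hirr a⟩
    · obtain ⟨m, hm, hmax⟩ := ih hne
      by_cases hram : r a m
      · refine ⟨a, Finset.mem_insert_self _ _, ?_⟩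
        intro t ht
        rcases Finset.mem_insert.1 ht with rfl | ht'
        · exact hirr _
        · intro hta
          exact hmax t ht' (htrans _ _ _ hta hram)
      · refine ⟨m, Finset.mem_insert_of_mem hm, ?_⟩
        intro t ht
        rcases Finset.mem_insert.1 ht with rfl | ht'
        · exact hram
        · exact hmax t ht'

theorem mulext_choose_disjoint {A : Type*} [DecidableEq A] (r : A → A → Prop)
    (hirr : ∀ x, ¬ r x x)
    (htrans : ∀ x y z, r x y → r y z → r x z)
    (M N X Y Z : Multiset A)
    (hX : X ≠ 0) (hM : M = X + Z) (hN : N = Y + Z)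
    (hY : ∀ y ∈ Y, ∃ x ∈ X, r x y) :
    (∀ j ∈ Y, j ∉ X - X ∩ Y → ∃ a ∈ X - X ∩ Y, r a j) ∧
    ∃ X' Y' Z' : Multiset A, X' ∩ Y' = 0 ∧ X' ≠ 0 ∧ M = X' + Z' ∧ N = Y' + Z' ∧
      ∀ y ∈ Y', ∃ x ∈ X', r x y := by
  classical
  have key : ∀ j ∈ Y, j ∉ X - X ∩ Y → ∃ a ∈ X - X ∩ Y, r a j := by
    intro j hj hjX
    set s : Finset A := X.toFinset.filter (fun x => r x j) with hs
    have hsne : s.Nonempty := by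
      obtain ⟨x, hx, hrx⟩ := hY j hj
      exact ⟨x, by simp [hs, Multiset.mem_toFinset.2 hx, hrx]⟩
    obtain ⟨m, hm, hmax⟩ := exists_rel_maximal r hirr htrans s hsne
    simp only [hs, Finset.mem_filter, Multiset.mem_toFinset] at hm
    obtain ⟨hmX, hrmj⟩ := hm
    refine ⟨m, ?_, hrmj⟩
    by_contra hmnot
    have hcX : 0 < X.count m := Multiset.count_pos.2 hmX
    have h0 : Multiset.count m (X - X ∩ Y) = 0 := by
      by_contra h
      exact hmnot (Multiset.count_pos.1 (Nat.pos_of_ne_zero h))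
    simp [Multiset.count_sub, Multiset.count_inter] at h0
    have hmY : m ∈ Y := Multiset.count_pos.1 (by omega)
    obtain ⟨x, hx, hrx⟩ := hY m hmY
    have hxs : x ∈ s := by
      simp [hs, Multiset.mem_toFinset.2 hx, htrans _ _ _ hrx hrmj]
    exact hmax x hxs hrx
  refine ⟨key, X - X ∩ Y, Y - X ∩ Y, Z + X ∩ Y, ?_, ?_, ?_, ?_, ?_⟩
  · ext a
    simp [Multiset.count_inter, Multiset.count_sub]
    omega
  · intro h0
    obtain ⟨x, hx⟩ := Multiset.exists_mem_of_ne_zero hX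
    have hcX : 0 < X.count x := Multiset.count_pos.2 hx
    have h := congrArg (Multiset.count x) h0
    simp [Multiset.count_sub, Multiset.count_inter] at h
    have hxY : x ∈ Y := Multiset.count_pos.1 (by omega)
    obtain ⟨a, ha, _⟩ := key x hxY (by simp [h0])
    simp [h0] at ha
  · rw [hM]
    ext a
    simp [Multiset.count_sub, Multiset.count_inter]
    omega
  · rw [hN]
    ext a
    simp [Multiset.count_sub, Multiset.count_inter]
    omega
  · intro y hy
    have hyY : y ∈ Y := Multiset.mem_of_le (Multiset.sub_le_self _ _) hy
    have hynot : y ∉ X - X ∩ Y := by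
      have h1 : 0 < Multiset.count y (Y - X ∩ Y) := Multiset.count_pos.2 hy
      intro hcon
      have h2 : 0 < Multiset.count y (X - X ∩ Y) := Multiset.count_pos.2 hcon
      simp [Multiset.count_sub, Multiset.count_inter] at h1 h2
      omega
    exact key y hyY hynot
end

section
/- If r is irreflexive and transitive and M >ᵐᵘˡ N via the multiset extension of r, then there exist multisets X, Y, Z with X ∩ Y = ∅ (as multisets, i.e., no common element), X ≠ ∅, M = X + Z, N = Y + Z, and every y ∈ Y is r-below some x ∈ X. -/
theorem mulext_disjoint_decomposition {A : Type*} [DecidableEq A] (r : A → A → Prop)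
    (hirr : ∀ x, ¬ r x x)
    (htrans : ∀ x y z, r x y → r y z → r x z)
    (M N : Multiset A) (h : MulExt r M N) :
    ∃ X Y Z : Multiset A, X ∩ Y = 0 ∧ X ≠ 0 ∧ M = X + Z ∧ N = Y + Z ∧
      ∀ y ∈ Y, ∃ x ∈ X, r x y := by
  classical
  obtain ⟨X, Y, Z, hX, hM, hN, hdom⟩ := h
  have hmax : ∀ (S : Multiset A), S ≠ 0 → ∃ x ∈ S, ∀ x' ∈ S, ¬ r x' x := by
    intro S
    induction S using Multiset.induction with
    | empty => intro hh; exact absurd rfl hh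
    | cons a s ih =>
      intro _
      by_cases hs : s = 0
      · subst hs
        exact ⟨a, by simp, by simp [hirr]⟩
      · obtain ⟨x, hx, hxm⟩ := ih hs
        by_cases hax : r a x
        · refine ⟨a, by simp, ?_⟩
          intro x' hx' hr
          rcases Multiset.mem_cons.mp hx' with rfl | hx'
          · exact hirr _ hr
          · exact hxm x' hx' (htrans _ _ _ hr hax)
        · refine ⟨x, Multiset.mem_cons_of_mem hx, ?_⟩
          intro x' hx' hr
          rcases Multiset.mem_cons.mp hx' with rfl | hx'
          · exact hax hr
          · exact hxm x' hx' hr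
  -- dominators can be chosen in X - Y
  have key : ∀ y, (∃ x ∈ X, r x y) → ∃ x ∈ X - Y, r x y := by
    intro y hy
    obtain ⟨x0, hx0, hr0⟩ := hy
    set S := X.filter (fun x => r x y) with hS
    have hSne : S ≠ 0 := by
      intro hz
      have : x0 ∈ S := Multiset.mem_filter.mpr ⟨hx0, hr0⟩
      simp [hz] at this
    obtain ⟨x, hxS, hxm⟩ := hmax S hSne
    obtain ⟨hxX, hxy⟩ := Multiset.mem_filter.mp hxS
    by_cases hmem : x ∈ X - Y
    · exact ⟨x, hmem, hxy⟩
    · exfalso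
      have hcx : 0 < X.count x := Multiset.count_pos.mpr hxX
      have hcs : X.count x - Y.count x = 0 := by
        by_contra hc
        exact hmem (Multiset.count_pos.mp (by rw [Multiset.count_sub]; omega))
      have hxY : x ∈ Y := Multiset.count_pos.mp (by omega)
      obtain ⟨x', hx'X, hx'r⟩ := hdom x hxY
      exact hxm x' (Multiset.mem_filter.mpr ⟨hx'X, htrans _ _ _ hx'r hxy⟩) hx'r
  refine ⟨X - Y, Y - X, Z + X ∩ Y, ?_, ?_, ?_, ?_, ?_⟩
  · ext a
    simp only [Multiset.count_inter, Multiset.count_sub, Multiset.count_zero]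
    omega
  · intro hz
    have hle : X ≤ Y := tsub_eq_zero_iff_le.mp hz
    obtain ⟨x, hxX, hxm⟩ := hmax X hX
    have hxY : x ∈ Y := Multiset.mem_of_le hle hxX
    obtain ⟨x', hx'X, hx'r⟩ := hdom x hxY
    exact hxm x' hx'X hx'r
  · rw [hM]; ext a
    simp only [Multiset.count_add, Multiset.count_sub, Multiset.count_inter]
    omega
  · rw [hN]; ext a
    simp only [Multiset.count_add, Multiset.count_sub, Multiset.count_inter]
    omega
  · intro y hy
    have hyY : y ∈ Y := Multiset.mem_of_le (tsub_le_self) hy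
    exact key y (hdom y hyY)
end
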